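/- Quaternionic variational (Welch-type) characterisation of tight frames: let v_1, …, v_n ∈ ℍ^d, not all zero, with synthesis matrix V = [v_1, …, v_n]. Then ∑_{j=1}^n ∑_{k=1}^n |⟨v_j, v_k⟩|² ≥ (1/d)·(∑_{j=1}^n ‖v_j‖²)², with equality if and only if there is a real A > 0 with V·Vᴴ = A·I_d (i.e., (v_j) is a tight frame for ℍ^d). -/

import Mathlib

open Quaternion Matrix BigOperators

/-- Euclidean inner product on `ℍ^d`: `⟨v,w⟩ = ∑ i, conj (w i) * v i`
(linear in the first variable). -/
noncomputable def qip {d : ℕ} (v w : Fin d → ℍ[ℝ]) : ℍ[ℝ] :=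
  ∑ i, star (w i) * v i

/-- Squared Euclidean norm on `ℍ^d`, a nonnegative real. -/
noncomputable def nsq {d : ℕ} (v : Fin d → ℍ[ℝ]) : ℝ :=
  ∑ i, Quaternion.normSq (v i)

/-!
Let `V` be the synthesis matrix and `S = V Vᴴ`. The frame potential `∑ |⟨v_j, v_k⟩|²` is the
squared Frobenius norm of `Vᴴ V`, which equals that of `S` because `re tr (A B) = re tr (B A)`
over `ℍ`, and `∑ ‖v_j‖² = re tr S`. Removing from `S` its component `c • 1`, `c = re tr S / d`,
along the real scalar matrices is Pythagoras for the Frobenius norm: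
`d ‖S‖² - (re tr S)² = d ‖S - c • 1‖² ≥ 0`, with equality iff `S` is a real multiple of the
identity; that multiple is positive since `re tr S > 0`.
-/

namespace Quaternion

variable {R : Type*} [CommRing R]

theorem re_sum {ι : Type*} (s : Finset ι) (f : ι → ℍ[R]) :
    (∑ i ∈ s, f i).re = ∑ i ∈ s, (f i).re :=
  map_sum (QuaternionAlgebra.reₗ (-1) 0 (-1)) f s

theorem re_mul_comm (a b : ℍ[R]) : (a * b).re = (b * a).re := by
  simp only [re_mul]
  ring

theorem normSq_sub_coe (a : ℍ[R]) (c : R) :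
    normSq (a - (c : ℍ[R])) = normSq a - 2 * c * a.re + c ^ 2 := by
  simp only [normSq_def', re_sub, imI_sub, imJ_sub, imK_sub, re_coe, imI_coe, imJ_coe, imK_coe]
  ring

end Quaternion

namespace Matrix

section CommRing

variable {R : Type*} [CommRing R] {m n ι : Type*} [Fintype m] [Fintype n]

theorem re_trace_mul_comm (A : Matrix m n ℍ[R]) (B : Matrix n m ℍ[R]) :
    (A * B).trace.re = (B * A).trace.re := by
  simp only [trace, diag, mul_apply, Quaternion.re_sum]
  rw [Finset.sum_comm]
  simp only [Quaternion.re_mul_comm]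

theorem sum_normSq_eq_re_trace_mul_conjTranspose (A : Matrix m n ℍ[R]) :
    ∑ i, ∑ j, normSq (A i j) = (A * Aᴴ).trace.re := by
  simp [trace, mul_apply, Quaternion.re_sum, normSq_def]

theorem sum_normSq_conjTranspose_mul_self (A : Matrix m n ℍ[R]) :
    ∑ j, ∑ k, normSq ((Aᴴ * A) j k) = ∑ i, ∑ l, normSq ((A * Aᴴ) i l) := by
  simp only [sum_normSq_eq_re_trace_mul_conjTranspose, conjTranspose_mul,
    conjTranspose_conjTranspose, Matrix.mul_assoc]
  rw [re_trace_mul_comm]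
  simp only [Matrix.mul_assoc]

theorem smul_one_apply_eq_ite_coe [DecidableEq ι] (c : R) (i j : ι) :
    (c • (1 : Matrix ι ι ℍ[R])) i j = if i = j then (c : ℍ[R]) else 0 := by
  rw [smul_apply, one_apply]
  split_ifs
  · ext <;> simp
  · simp

variable [Fintype ι] [DecidableEq ι]

theorem re_trace_smul_one (c : R) :
    (c • (1 : Matrix ι ι ℍ[R])).trace.re = Fintype.card ι * c := by
  simp [trace, mul_comm]

theorem sum_normSq_sub_smul_one (S : Matrix ι ι ℍ[R]) (c : R) :
    ∑ i, ∑ j, normSq ((S - c • 1) i j) =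
      ∑ i, ∑ j, normSq (S i j) - 2 * c * S.trace.re + Fintype.card ι * c ^ 2 := by
  have hentry : ∀ i j, normSq ((S - c • 1) i j) =
      normSq (S i j) - if i = j then 2 * c * (S i i).re - c ^ 2 else 0 := by
    intro i j
    rw [sub_apply, smul_one_apply_eq_ite_coe]
    split_ifs with h
    · subst h
      rw [Quaternion.normSq_sub_coe]
      ring
    · simp
  simp only [hentry, Finset.sum_sub_distrib, Finset.sum_ite_eq, Finset.mem_univ, if_true,
    trace, diag, Quaternion.re_sum, Finset.mul_sum, Finset.sum_const, Finset.card_univ,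
    nsmul_eq_mul]
  ring

end CommRing

section Real

variable {m n ι : Type*} [Fintype m] [Fintype n] [Fintype ι] [DecidableEq ι]

theorem sum_normSq_nonneg (A : Matrix m n ℍ[ℝ]) : 0 ≤ ∑ i, ∑ j, normSq (A i j) :=
  Finset.sum_nonneg fun _ _ => Finset.sum_nonneg fun _ _ => normSq_nonneg

theorem sum_normSq_eq_zero_iff (A : Matrix m n ℍ[ℝ]) :
    ∑ i, ∑ j, normSq (A i j) = 0 ↔ A = 0 := by
  simp [Finset.sum_eq_zero_iff_of_nonneg, Finset.sum_nonneg, ← Matrix.ext_iff]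

theorem sum_normSq_smul_one (c : ℝ) :
    ∑ i, ∑ j, normSq ((c • (1 : Matrix ι ι ℍ[ℝ])) i j) = Fintype.card ι * c ^ 2 := by
  simp only [smul_one_apply_eq_ite_coe, apply_ite normSq, normSq_coe, map_zero,
    Finset.sum_ite_eq, Finset.mem_univ, if_true, Finset.sum_const, Finset.card_univ,
    nsmul_eq_mul]

theorem card_mul_sum_normSq_sub_smul_one (S : Matrix ι ι ℍ[ℝ]) :
    Fintype.card ι * ∑ i, ∑ j, normSq ((S - (S.trace.re / Fintype.card ι) • 1) i j) =
      Fintype.card ι * ∑ i, ∑ j, normSq (S i j) - S.trace.re ^ 2 := by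
  rw [sum_normSq_sub_smul_one]
  rcases isEmpty_or_nonempty ι with hι | hι
  · simp [trace]
  · field_simp
    ring

theorem sq_re_trace_le_card_mul_sum_normSq (S : Matrix ι ι ℍ[ℝ]) :
    S.trace.re ^ 2 ≤ Fintype.card ι * ∑ i, ∑ j, normSq (S i j) := by
  have hpythagoras := card_mul_sum_normSq_sub_smul_one S
  have hnonneg := mul_nonneg (Nat.cast_nonneg (Fintype.card ι))
    (sum_normSq_nonneg (S - (S.trace.re / Fintype.card ι) • 1))
  linarith

theorem sq_re_trace_eq_card_mul_sum_normSq_iff (S : Matrix ι ι ℍ[ℝ]) :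
    S.trace.re ^ 2 = Fintype.card ι * ∑ i, ∑ j, normSq (S i j) ↔ ∃ c : ℝ, S = c • 1 := by
  constructor
  · intro h
    rcases isEmpty_or_nonempty ι with hι | hι
    · exact ⟨0, Subsingleton.elim _ _⟩
    have hzero := card_mul_sum_normSq_sub_smul_one S
    rw [← h, sub_self, mul_eq_zero, sum_normSq_eq_zero_iff, sub_eq_zero] at hzero
    exact ⟨_, hzero.resolve_left (by positivity)⟩
  · rintro ⟨c, rfl⟩
    rw [re_trace_smul_one, sum_normSq_smul_one]
    ring

end Real

end Matrix

/-- The quaternionic variational (Welch-type) characterisation of tight frames: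
for `v_1, …, v_n ∈ ℍ^d`, not all zero,
`∑_j ∑_k |⟨v_j,v_k⟩|² ≥ (1/d) (∑_j ‖v_j‖²)²`, with equality iff `(v_j)` is a
tight frame for `ℍ^d`, i.e. `V Vᴴ = A I_d` for some real `A > 0`. -/
theorem quaternionic_variational_characterisation (d n : ℕ)
    (v : Fin n → (Fin d → ℍ[ℝ])) (hv : ∃ j, v j ≠ 0) :
    (∑ j, ∑ k, Quaternion.normSq (qip (v j) (v k)) ≥
      (1 / (d : ℝ)) * (∑ j, nsq (v j)) ^ 2) ∧
    ((∑ j, ∑ k, Quaternion.normSq (qip (v j) (v k)) =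
        (1 / (d : ℝ)) * (∑ j, nsq (v j)) ^ 2) ↔
      ∃ A : ℝ, 0 < A ∧
        (Matrix.of fun i j => v j i) * (Matrix.of fun i j => v j i)ᴴ =
          A • (1 : Matrix (Fin d) (Fin d) ℍ[ℝ])) := by
  set V : Matrix (Fin d) (Fin n) ℍ[ℝ] := Matrix.of fun i j => v j i
  have hpot : ∑ j, ∑ k, normSq (qip (v j) (v k)) = ∑ i, ∑ l, normSq ((V * Vᴴ) i l) := by
    rw [← sum_normSq_conjTranspose_mul_self, Finset.sum_comm]
    simp [qip, V, mul_apply]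
  have htr : ∑ j, nsq (v j) = (V * Vᴴ).trace.re := by
    rw [← sum_normSq_eq_re_trace_mul_conjTranspose, Finset.sum_comm]
    rfl
  have hV : V ≠ 0 := by
    obtain ⟨j, hj⟩ := hv
    exact fun h => hj <| funext fun i => congr_fun (congr_fun h i) j
  have hpos : 0 < (V * Vᴴ).trace.re := by
    rw [← sum_normSq_eq_re_trace_mul_conjTranspose]
    exact (sum_normSq_nonneg V).lt_of_ne' (mt (sum_normSq_eq_zero_iff V).1 hV)
  have hle := sq_re_trace_le_card_mul_sum_normSq (V * Vᴴ)
  have hiff := sq_re_trace_eq_card_mul_sum_normSq_iff (V * Vᴴ)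
  rw [Fintype.card_fin] at hle hiff
  have hd : (0 : ℝ) < d :=
    pos_of_mul_pos_left (hle.trans_lt' (by positivity)) (sum_normSq_nonneg _)
  rw [hpot, htr, ge_iff_le, one_div_mul_eq_div, div_le_iff₀ hd, eq_comm, div_eq_iff hd.ne',
    mul_comm _ (d : ℝ), hiff]
  refine ⟨hle, fun ⟨c, hc⟩ => ⟨c, ?_, hc⟩, fun ⟨A, _, hA⟩ => ⟨A, hA⟩⟩
  rw [hc, re_trace_smul_one, Fintype.card_fin] at hpos
  exact pos_of_mul_pos_right hpos (Nat.cast_nonneg d)
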